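/- arXiv:2208.07676 — 2 statements merged into one kernel-verified Lean document; each statement's English description precedes it below -/
import Mathlib

section
/- Let q be an odd prime power and m ≥ 1. Then the bracket on 𝔥_m := 𝔽_{q^m}^5 given by [(a,b,c,d,e),(x,y,z,u,v)] = (0, 0, ay−bx, ay−bx+2cx−2az, ay−bx+2bz−2cy) makes 𝔥_m into a Lie algebra over 𝔽_q of dimension 5m which is 3-step nilpotent, stem, and of breadth type (0,2m). -/
open Module

section BasicDefs

/-- The centralizer of `x` in a Lie algebra, as a submodule. -/
def lieCentralizer (K : Type*) [CommRing K] {L : Type*} [LieRing L] [LieAlgebra K L]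
    (x : L) : Submodule K L where
  carrier := {y : L | ⁅x, y⁆ = 0}
  add_mem' := by
    intro a b ha hb
    simp only [Set.mem_setOf_eq, lie_add] at *
    rw [ha, hb, add_zero]
  zero_mem' := by simp
  smul_mem' := by
    intro c a ha
    simp only [Set.mem_setOf_eq, lie_smul] at *
    rw [ha, smul_zero]

/-- The center of a Lie algebra, as a submodule. -/
def lieCenterSub (K : Type*) [CommRing K] (L : Type*) [LieRing L] [LieAlgebra K L] :
    Submodule K L where
  carrier := {z : L | ∀ y : L, ⁅z, y⁆ = 0}
  add_mem' := by
    intro a b ha hb y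
    rw [add_lie, ha y, hb y, add_zero]
  zero_mem' := fun y => zero_lie y
  smul_mem' := by
    intro c a ha y
    rw [smul_lie, ha y, smul_zero]

/-- `gammaSub K L k` is the `(k+1)`-st term `γ_{k+1}(L)` of the lower central series, so that
`gammaSub K L 0 = γ₁(L) = L` and `γ_{i+1}(L) = [L, γ_i(L)]`. -/
def gammaSub (K : Type*) [CommRing K] (L : Type*) [LieRing L] [LieAlgebra K L] :
    ℕ → Submodule K L
  | 0 => ⊤
  | k + 1 => Submodule.span K {z : L | ∃ x : L, ∃ y ∈ gammaSub K L k, ⁅x, y⁆ = z}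

/-- The derived subalgebra `L' = [L, L]` as a submodule. -/
def derivedSub (K : Type*) [CommRing K] (L : Type*) [LieRing L] [LieAlgebra K L] :
    Submodule K L :=
  gammaSub K L 1

/-- `L` is 3-step nilpotent: `γ₄(L) = 0` and `γ₃(L) ≠ 0`. -/
def IsThreeStepNilpotentAlg (K : Type*) [CommRing K] (L : Type*) [LieRing L]
    [LieAlgebra K L] : Prop :=
  gammaSub K L 3 = ⊥ ∧ gammaSub K L 2 ≠ ⊥

/-- `L` is a stem Lie algebra: `Z(L) ⊆ L'`. -/
def IsStemAlg (K : Type*) [CommRing K] (L : Type*) [LieRing L] [LieAlgebra K L] : Prop :=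
  lieCenterSub K L ≤ derivedSub K L

/-- The breadth of an element: `dim L - dim C_L(x)`. -/
noncomputable def lieBreadth (K : Type*) [CommRing K] {L : Type*} [LieRing L]
    [LieAlgebra K L] (x : L) : ℕ :=
  finrank K L - finrank K (lieCentralizer K x)

/-- `L` has breadth type `(0, n)`: `L` is non-abelian and every non-central element has
breadth exactly `n`. -/
def HasBreadthTypeZeroN (K : Type*) [CommRing K] (L : Type*) [LieRing L] [LieAlgebra K L]
    (n : ℕ) : Prop :=
  (∃ a b : L, ⁅a, b⁆ ≠ 0) ∧ ∀ x : L, x ∉ lieCenterSub K L → lieBreadth K x = n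

/-- The image `[x, L]` of `ad x`, as a submodule. -/
def adImage (K : Type*) [CommRing K] {L : Type*} [LieRing L] [LieAlgebra K L] (x : L) :
    Submodule K L where
  carrier := {z : L | ∃ y : L, ⁅x, y⁆ = z}
  add_mem' := by
    rintro a b ⟨ya, rfl⟩ ⟨yb, rfl⟩
    exact ⟨ya + yb, lie_add x ya yb⟩
  zero_mem' := ⟨0, lie_zero x⟩
  smul_mem' := by
    rintro c a ⟨y, rfl⟩
    exact ⟨c • y, lie_smul c x y⟩

/-- `L` is a Camina Lie algebra: `[x, L] = L'` for every `x ∉ L'`. -/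
def IsCaminaAlg (K : Type*) [CommRing K] (L : Type*) [LieRing L] [LieAlgebra K L] : Prop :=
  ∀ x : L, x ∉ derivedSub K L → adImage K x = derivedSub K L

end BasicDefs

section G5

/-- The underlying type of the Lie algebra `𝔤_m`: quintuples over `R`. -/
abbrev G5 (R : Type*) := R × R × R × R × R

namespace G5

variable {R : Type*} [CommRing R]

/-- The bracket `[(a,b,c,d,e),(x,y,z,u,v)] = (0,0, ay-bx, ay-bx+2cx-2az, ay-bx+2bz-2cy)`. -/
def br (P Q : G5 R) : G5 R :=
  (0, 0,
    P.1 * Q.2.1 - P.2.1 * Q.1,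
    P.1 * Q.2.1 - P.2.1 * Q.1 + 2 * P.2.2.1 * Q.1 - 2 * P.1 * Q.2.2.1,
    P.1 * Q.2.1 - P.2.1 * Q.1 + 2 * P.2.1 * Q.2.2.1 - 2 * P.2.2.1 * Q.2.1)

private lemma add_br (P Q N : G5 R) : br (P + Q) N = br P N + br Q N := by
  obtain ⟨a, b, c, d, e⟩ := P
  obtain ⟨a', b', c', d', e'⟩ := Q
  obtain ⟨x, y, z, u, v⟩ := N
  simp only [br, Prod.mk_add_mk, Prod.mk.injEq]
  and_intros <;> ring

private lemma br_add (P Q N : G5 R) : br P (Q + N) = br P Q + br P N := by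
  obtain ⟨a, b, c, d, e⟩ := P
  obtain ⟨a', b', c', d', e'⟩ := Q
  obtain ⟨x, y, z, u, v⟩ := N
  simp only [br, Prod.mk_add_mk, Prod.mk.injEq]
  and_intros <;> ring

private lemma br_self (P : G5 R) : br P P = 0 := by
  obtain ⟨a, b, c, d, e⟩ := P
  simp only [br, Prod.mk_eq_zero]
  and_intros <;> first | ring | trivial

private lemma br_leibniz (P Q N : G5 R) : br P (br Q N) = br (br P Q) N + br Q (br P N) := by
  obtain ⟨a, b, c, d, e⟩ := P
  obtain ⟨a', b', c', d', e'⟩ := Q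
  obtain ⟨x, y, z, u, v⟩ := N
  simp only [br, Prod.mk_add_mk, Prod.mk.injEq]
  and_intros <;> ring

instance (priority := 2000) instLieRing : LieRing (G5 R) :=
  { (inferInstance : AddCommGroup (G5 R)) with
    bracket := br
    add_lie := add_br
    lie_add := br_add
    lie_self := br_self
    leibniz_lie := br_leibniz }

@[simp] lemma bracket_def (P Q : G5 R) : ⁅P, Q⁆ = br P Q := rfl

variable {K : Type*} [CommRing K] [Algebra K R]

private lemma br_smul (t : K) (P Q : G5 R) : br P (t • Q) = t • br P Q := by
  obtain ⟨a, b, c, d, e⟩ := P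
  obtain ⟨x, y, z, u, v⟩ := Q
  simp only [br, Prod.smul_mk, Prod.mk.injEq]
  and_intros <;> simp only [Algebra.smul_def] <;> ring

instance (priority := 2000) instLieAlgebra : LieAlgebra K (G5 R) :=
  { (inferInstance : Module K (G5 R)) with
    lie_smul := br_smul }

end G5

end G5

section U3

attribute [local instance 100] LieRing.ofAssociativeRing

private lemma mul_strictUpper {K' : Type*} [CommRing K'] {M N : Matrix (Fin 3) (Fin 3) K'}
    (hM : ∀ i j : Fin 3, j ≤ i → M i j = 0) (hN : ∀ i j : Fin 3, j ≤ i → N i j = 0) :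
    ∀ i j : Fin 3, j ≤ i → (M * N) i j = 0 := by
  intro i j hij
  rw [Matrix.mul_apply]
  apply Finset.sum_eq_zero
  intro k _
  rcases le_or_gt k i with h | h
  · rw [hM i k h, zero_mul]
  · rw [hN k j (hij.trans h.le), mul_zero]

/-- The Lie algebra (over `K`) of 3×3 strictly upper triangular matrices with entries
in `K'`, with bracket `[A, B] = AB - BA`. -/
def U3 (K K' : Type*) [CommRing K] [CommRing K'] [Algebra K K'] :
    LieSubalgebra K (Matrix (Fin 3) (Fin 3) K') where
  carrier := {M : Matrix (Fin 3) (Fin 3) K' | ∀ i j : Fin 3, j ≤ i → M i j = 0}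
  add_mem' := by
    intro a b ha hb i j hij
    simp only [Matrix.add_apply, ha i j hij, hb i j hij, add_zero]
  zero_mem' := fun i j _ => rfl
  smul_mem' := by
    intro c M hM i j hij
    simp only [Matrix.smul_apply, hM i j hij, smul_zero]
  lie_mem' := by
    intro M N hM hN i j hij
    have h1 : (M * N) i j = 0 := mul_strictUpper hM hN i j hij
    have h2 : (N * M) i j = 0 := mul_strictUpper hN hM i j hij
    simp only [Ring.lie_def, Matrix.sub_apply, h1, h2, sub_zero]

end U3

section Semifield

/-- A (finite-dimensional) semifield structure over `K` on the `K`-vector space `F`: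
a `K`-bilinear multiplication with a two-sided identity and no zero divisors
(multiplication need not be associative). -/
structure SemifieldStruct (K F : Type*) [Field K] [AddCommGroup F] [Module K F] where
  mul : F →ₗ[K] F →ₗ[K] F
  one : F
  one_ne_zero : one ≠ 0
  one_mul : ∀ a : F, mul one a = a
  mul_one : ∀ a : F, mul a one = a
  eq_zero_or_eq_zero_of_mul_eq_zero : ∀ a b : F, mul a b = 0 → a = 0 ∨ b = 0

variable {K F : Type*} [Field K] [AddCommGroup F] [Module K F]

/-- The bracket of the semifield Lie algebra `L(F)`:
`[(a₁,b₁,c₁),(a₂,b₂,c₂)] = (0, 0, a₁·b₂ − a₂·b₁)`. -/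
def lfbr (S : SemifieldStruct K F) (P Q : F × F × F) : F × F × F :=
  (0, 0, S.mul P.1 Q.2.1 - S.mul Q.1 P.2.1)

private lemma lfbr_add_left (S : SemifieldStruct K F) (P Q N : F × F × F) :
    lfbr S (P + Q) N = lfbr S P N + lfbr S Q N := by
  simp only [lfbr, Prod.fst_add, Prod.snd_add, map_add, LinearMap.add_apply,
    Prod.mk_add_mk, Prod.mk.injEq, add_zero]
  and_intros <;> first | abel | trivial

private lemma lfbr_add_right (S : SemifieldStruct K F) (P Q N : F × F × F) :
    lfbr S P (Q + N) = lfbr S P Q + lfbr S P N := by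
  simp only [lfbr, Prod.fst_add, Prod.snd_add, map_add, LinearMap.add_apply,
    Prod.mk_add_mk, Prod.mk.injEq, add_zero]
  and_intros <;> first | abel | trivial

private lemma lfbr_self (S : SemifieldStruct K F) (P : F × F × F) : lfbr S P P = 0 := by
  simp only [lfbr, sub_self, Prod.mk_eq_zero]
  and_intros <;> trivial

private lemma lfbr_leibniz (S : SemifieldStruct K F) (P Q N : F × F × F) :
    lfbr S P (lfbr S Q N) = lfbr S (lfbr S P Q) N + lfbr S Q (lfbr S P N) := by
  simp only [lfbr, map_zero, LinearMap.zero_apply, sub_zero, zero_sub, map_sub,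
    LinearMap.sub_apply, Prod.mk_add_mk, Prod.mk.injEq, add_zero]

/-- The Lie ring structure of the semifield Lie algebra `L(F)` on `F × F × F`. -/
def lfLieRing (S : SemifieldStruct K F) : LieRing (F × F × F) :=
  { (inferInstance : AddCommGroup (F × F × F)) with
    bracket := lfbr S
    add_lie := lfbr_add_left S
    lie_add := lfbr_add_right S
    lie_self := lfbr_self S
    leibniz_lie := lfbr_leibniz S }

private lemma lfbr_smul (S : SemifieldStruct K F) (t : K) (P Q : F × F × F) :
    lfbr S P (t • Q) = t • lfbr S P Q := by
  simp only [lfbr, Prod.smul_fst, Prod.smul_snd, map_smul, LinearMap.smul_apply,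
    Prod.smul_mk, Prod.mk.injEq, smul_zero, smul_sub]

/-- The Lie algebra structure of the semifield Lie algebra `L(F)` on `F × F × F`. -/
def lfLieAlgebra (S : SemifieldStruct K F) :
    letI := lfLieRing S
    LieAlgebra K (F × F × F) :=
  letI := lfLieRing S
  { (inferInstance : Module K (F × F × F)) with
    lie_smul := lfbr_smul S }

end Semifield


section StmtHelpers

open Submodule

variable {K : Type*} [Field K] {E : Type*} [Field E] [Algebra K E]

lemma br_mk (a b c d e x y z u v : E) :
    (⁅((a,b,c,d,e) : G5 E), ((x,y,z,u,v) : G5 E)⁆ : G5 E) =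
      (0, 0, a*y - b*x, a*y - b*x + 2*c*x - 2*a*z, a*y - b*x + 2*b*z - 2*c*y) := rfl

lemma mem_center_iff (two_ne : (2:E) ≠ 0) (a b c d e : E) :
    ((a,b,c,d,e) : G5 E) ∈ lieCenterSub K (G5 E) ↔ a = 0 ∧ b = 0 ∧ c = 0 := by
  constructor
  · intro h
    have h1 := h (0, 1, 0, 0, 0)
    have h2 := h (1, 0, 0, 0, 0)
    rw [br_mk] at h1 h2
    simp only [Prod.mk_eq_zero] at h1 h2
    obtain ⟨-, -, e3, -, e5⟩ := h1
    obtain ⟨-, -, f3, -, -⟩ := h2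
    have ha : a = 0 := by linear_combination e3
    have hb : b = 0 := by linear_combination -f3
    have hc : c = 0 := by
      have h2c : 2 * c = 0 := by linear_combination e3 - e5
      rcases mul_eq_zero.mp h2c with h' | h'
      · exact absurd h' two_ne
      · exact h'
    exact ⟨ha, hb, hc⟩
  · rintro ⟨rfl, rfl, rfl⟩ Q
    obtain ⟨x, y, z, u, v⟩ := Q
    rw [br_mk]
    simp only [Prod.mk_eq_zero]
    refine ⟨trivial, trivial, by ring, by ring, by ring⟩

lemma mem_cen_iff (two_ne : (2:E) ≠ 0) (a b c d e x y z u v : E) :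
    ((x,y,z,u,v) : G5 E) ∈ lieCentralizer K ((a,b,c,d,e) : G5 E) ↔
      (a*y - b*x = 0 ∧ c*x - a*z = 0 ∧ b*z - c*y = 0) := by
  have hmem : ((x,y,z,u,v) : G5 E) ∈ lieCentralizer K ((a,b,c,d,e) : G5 E) ↔
      (⁅((a,b,c,d,e) : G5 E), ((x,y,z,u,v) : G5 E)⁆ : G5 E) = 0 := Iff.rfl
  rw [hmem, br_mk]
  simp only [Prod.mk_eq_zero]
  constructor
  · rintro ⟨-, -, h1, h2, h3⟩
    refine ⟨h1, ?_, ?_⟩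
    · have h : 2 * (c * x - a * z) = 0 := by linear_combination h2 - h1
      rcases mul_eq_zero.mp h with h' | h'
      · exact absurd h' two_ne
      · exact h'
    · have h : 2 * (b * z - c * y) = 0 := by linear_combination h3 - h1
      rcases mul_eq_zero.mp h with h' | h'
      · exact absurd h' two_ne
      · exact h'
  · rintro ⟨h1, h2, h3⟩
    exact ⟨trivial, trivial, h1, by linear_combination h1 + 2*h2, by linear_combination h1 + 2*h3⟩

/-- An auxiliary `E`-linear map on `G5 E` with matrix rows `(p,q,r)` and `(s,t,u)` acting on
the first three coordinates. -/
def g5map (p q r s t u : E) : G5 E →ₗ[E] E × E where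
  toFun Q := (p * Q.1 + q * Q.2.1 + r * Q.2.2.1, s * Q.1 + t * Q.2.1 + u * Q.2.2.1)
  map_add' Q Q' := by
    obtain ⟨x, y, z, w, v⟩ := Q
    obtain ⟨x', y', z', w', v'⟩ := Q'
    simp only [Prod.mk_add_mk, Prod.mk.injEq]
    constructor <;> ring
  map_smul' a Q := by
    obtain ⟨x, y, z, w, v⟩ := Q
    simp only [Prod.smul_mk, smul_eq_mul, RingHom.id_apply, Prod.mk.injEq]
    constructor <;> ring

@[simp] lemma g5map_apply (p q r s t u x y z w v : E) :
    g5map p q r s t u ((x, y, z, w, v) : G5 E) = (p*x + q*y + r*z, s*x + t*y + u*z) := rfl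

lemma finrank_g5 [FiniteDimensional K E] : finrank K (G5 E) = finrank K E * 5 := by
  rw [← Module.finrank_mul_finrank K E (G5 E)]
  congr 1
  simp [Module.finrank_prod, Module.finrank_self]

lemma finrank_cen [FiniteDimensional K E] (two_ne : (2:E) ≠ 0) (a b c d e : E)
    (hP : ¬(a = 0 ∧ b = 0 ∧ c = 0)) :
    finrank K (lieCentralizer K ((a,b,c,d,e) : G5 E)) = finrank K E * 3 := by
  obtain ⟨f, hsurj, hker⟩ : ∃ f : G5 E →ₗ[E] E × E, Function.Surjective f ∧
      ∀ Q : G5 E, Q ∈ lieCentralizer K ((a,b,c,d,e) : G5 E) ↔ Q ∈ LinearMap.ker f := by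
    by_cases ha : a ≠ 0
    · refine ⟨g5map (-b) a 0 (-c) 0 a, ?_, ?_⟩
      · rintro ⟨s₁, s₂⟩
        refine ⟨(0, a⁻¹ * s₁, a⁻¹ * s₂, 0, 0), ?_⟩
        rw [g5map_apply]
        simp only [Prod.mk.injEq]
        constructor <;> field_simp <;> ring
      · rintro ⟨x, y, z, u, v⟩
        rw [mem_cen_iff two_ne, LinearMap.mem_ker, g5map_apply, Prod.mk_eq_zero]
        constructor
        · rintro ⟨h1, h2, h3⟩
          exact ⟨by linear_combination h1, by linear_combination -h2⟩
        · rintro ⟨h1, h2⟩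
          refine ⟨by linear_combination h1, by linear_combination -h2, ?_⟩
          have h : a * (b * z - c * y) = 0 := by linear_combination b * h2 - c * h1
          exact (mul_eq_zero.mp h).resolve_left ha
    · by_cases hb : b ≠ 0
      · refine ⟨g5map (-b) a 0 0 (-c) b, ?_, ?_⟩
        · rintro ⟨s₁, s₂⟩
          refine ⟨(-(b⁻¹ * s₁), 0, b⁻¹ * s₂, 0, 0), ?_⟩
          rw [g5map_apply]
          simp only [Prod.mk.injEq]
          constructor <;> field_simp <;> ring
        · rintro ⟨x, y, z, u, v⟩
          rw [mem_cen_iff two_ne, LinearMap.mem_ker, g5map_apply, Prod.mk_eq_zero]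
          constructor
          · rintro ⟨h1, h2, h3⟩
            exact ⟨by linear_combination h1, by linear_combination h3⟩
          · rintro ⟨h1, h2⟩
            refine ⟨by linear_combination h1, ?_, by linear_combination h2⟩
            have h : b * (c * x - a * z) = 0 := by
              linear_combination (-c) * h1 + (-a) * h2
            exact (mul_eq_zero.mp h).resolve_left hb
      · have hc : c ≠ 0 := by
          push_neg at ha hb
          intro hc'
          exact hP ⟨ha, hb, hc'⟩
        refine ⟨g5map c 0 (-a) 0 c (-b), ?_, ?_⟩
        · rintro ⟨s₁, s₂⟩
          refine ⟨(c⁻¹ * s₁, c⁻¹ * s₂, 0, 0, 0), ?_⟩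
          rw [g5map_apply]
          simp only [Prod.mk.injEq]
          constructor <;> field_simp <;> ring
        · rintro ⟨x, y, z, u, v⟩
          rw [mem_cen_iff two_ne, LinearMap.mem_ker, g5map_apply, Prod.mk_eq_zero]
          constructor
          · rintro ⟨h1, h2, h3⟩
            exact ⟨by linear_combination h2, by linear_combination -h3⟩
          · rintro ⟨h1, h2⟩
            refine ⟨?_, by linear_combination h1, by linear_combination -h2⟩
            have h : c * (a * y - b * x) = 0 := by linear_combination a * h2 - b * h1
            exact (mul_eq_zero.mp h).resolve_left hc
  have hEq : lieCentralizer K ((a,b,c,d,e) : G5 E) =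
      (LinearMap.ker f).restrictScalars K := Submodule.ext fun Q => hker Q
  have h5 : finrank E (G5 E) = 5 := by
    simp [Module.finrank_prod, Module.finrank_self]
  have hr : finrank E ↥(LinearMap.range f) = 2 := by
    rw [LinearMap.range_eq_top.mpr hsurj]
    simp [Module.finrank_prod, Module.finrank_self, finrank_top]
  have hkf : finrank E ↥(LinearMap.ker f) = 3 := by
    have h := f.finrank_range_add_finrank_ker
    rw [hr, h5] at h
    omega
  rw [hEq]
  have e1 : finrank K ↥((LinearMap.ker f).restrictScalars K)
      = finrank K ↥(LinearMap.ker f) :=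
    ((Submodule.restrictScalarsEquiv K E (G5 E) (LinearMap.ker f)).restrictScalars
      K).finrank_eq
  rw [e1, ← Module.finrank_mul_finrank K E ↥(LinearMap.ker f), hkf]

/-- Elements of `G5 E` whose first two coordinates vanish. -/
def D12 (K E : Type*) [Field K] [Field E] [Algebra K E] : Submodule K (G5 E) where
  carrier := {P | P.1 = 0 ∧ P.2.1 = 0}
  add_mem' := by
    rintro P Q ⟨h1, h2⟩ ⟨h3, h4⟩
    exact ⟨by simp only [Prod.fst_add, h1, h3, add_zero],
      by simp only [Prod.snd_add, Prod.fst_add, h2, h4, add_zero]⟩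
  zero_mem' := ⟨rfl, rfl⟩
  smul_mem' := by
    rintro t P ⟨h1, h2⟩
    exact ⟨by simp only [Prod.smul_fst, h1, smul_zero],
      by simp only [Prod.smul_snd, Prod.smul_fst, h2, smul_zero]⟩

/-- Elements of `G5 E` whose first three coordinates vanish. -/
def D123 (K E : Type*) [Field K] [Field E] [Algebra K E] : Submodule K (G5 E) where
  carrier := {P | P.1 = 0 ∧ P.2.1 = 0 ∧ P.2.2.1 = 0}
  add_mem' := by
    rintro P Q ⟨h1, h2, h3⟩ ⟨h4, h5, h6⟩
    exact ⟨by simp only [Prod.fst_add, h1, h4, add_zero],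
      by simp only [Prod.snd_add, Prod.fst_add, h2, h5, add_zero],
      by simp only [Prod.snd_add, Prod.fst_add, h3, h6, add_zero]⟩
  zero_mem' := ⟨rfl, rfl, rfl⟩
  smul_mem' := by
    rintro t P ⟨h1, h2, h3⟩
    exact ⟨by simp only [Prod.smul_fst, h1, smul_zero],
      by simp only [Prod.smul_snd, Prod.smul_fst, h2, smul_zero],
      by simp only [Prod.smul_snd, Prod.smul_fst, h3, smul_zero]⟩

section Gammas

variable (K) (L : Type*) [LieRing L] [LieAlgebra K L]

lemma gamma1_eq : gammaSub K L 1
    = span K {z : L | ∃ x : L, ∃ y ∈ (⊤ : Submodule K L), ⁅x,y⁆ = z} := rfl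

lemma gamma2_eq : gammaSub K L 2
    = span K {z : L | ∃ x : L, ∃ y ∈ gammaSub K L 1, ⁅x,y⁆ = z} := rfl

lemma gamma3_eq : gammaSub K L 3
    = span K {z : L | ∃ x : L, ∃ y ∈ gammaSub K L 2, ⁅x,y⁆ = z} := rfl

end Gammas

lemma gamma1_le : gammaSub K (G5 E) 1 ≤ D12 K E := by
  rw [gamma1_eq, Submodule.span_le]
  rintro z ⟨x, y, -, rfl⟩
  exact ⟨rfl, rfl⟩

lemma gamma2_le : gammaSub K (G5 E) 2 ≤ D123 K E := by
  rw [gamma2_eq, Submodule.span_le]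
  rintro z ⟨P, Q, hQ, rfl⟩
  obtain ⟨h1, h2⟩ := gamma1_le hQ
  refine ⟨rfl, rfl, ?_⟩
  show P.1 * Q.2.1 - P.2.1 * Q.1 = 0
  rw [h1, h2]; ring

lemma gamma3_bot : gammaSub K (G5 E) 3 = ⊥ := by
  rw [gamma3_eq, Submodule.span_eq_bot]
  rintro z ⟨P, Q, hQ, rfl⟩
  obtain ⟨h1, h2, h3⟩ := gamma2_le hQ
  show G5.br P Q = 0
  unfold G5.br
  rw [h1, h2, h3]
  simp

lemma gamma2_ne (two_ne : (2:E) ≠ 0) : gammaSub K (G5 E) 2 ≠ ⊥ := by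
  intro h
  have hmem : ((0,0,0,-2,0) : G5 E) ∈ gammaSub K (G5 E) 2 := by
    rw [gamma2_eq]
    apply Submodule.subset_span
    refine ⟨((1:E),0,0,0,0), ((0:E),0,1,1,1), ?_, ?_⟩
    · rw [gamma1_eq]
      apply Submodule.subset_span
      refine ⟨((1:E),0,0,0,0), ((0:E),1,0,0,0), Submodule.mem_top, ?_⟩
      rw [br_mk]
      norm_num
    · rw [br_mk]
      norm_num
  rw [h] at hmem
  simp only [Submodule.mem_bot, Prod.mk_eq_zero] at hmem
  exact two_ne (neg_eq_zero.mp hmem.2.2.2.1)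

lemma stem_aux (two_ne : (2:E) ≠ 0) : IsStemAlg K (G5 E) := by
  intro z hz
  obtain ⟨a, b, c, d, e⟩ := z
  rw [mem_center_iff two_ne] at hz
  obtain ⟨rfl, rfl, rfl⟩ := hz
  rw [derivedSub, gamma1_eq]
  apply Submodule.subset_span
  refine ⟨((0:E), 0, 2⁻¹, 0, 0), ((d:E), -e, 0, 0, 0), Submodule.mem_top, ?_⟩
  rw [br_mk]
  have h2 : (2:E) * 2⁻¹ = 1 := mul_inv_cancel₀ two_ne
  simp only [Prod.mk.injEq]
  refine ⟨trivial, trivial, by ring, by linear_combination d * h2, by linear_combination e * h2⟩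

end StmtHelpers

/-- For an odd prime power `q` and `m ≥ 1`, the given bracket makes
`𝔥_m = 𝔽_{q^m}^5` into a Lie algebra over `𝔽_q` of dimension `5m` which is 3-step nilpotent,
stem and of breadth type `(0, 2m)`. (The Lie algebra structure on `G5 E` is exactly the given
bracket, as recorded by the first conjunct.) -/
theorem stmt8 (q m : ℕ) (hodd : Odd q) (hm : 1 ≤ m)
    (K : Type*) [Field K] [Fintype K] (hK : Fintype.card K = q)
    (E : Type*) [Field E] [Algebra K E] [FiniteDimensional K E]
    (hE : Module.finrank K E = m) :
    (∀ P Q : G5 E, ⁅P, Q⁆ = ((0, 0,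
        P.1 * Q.2.1 - P.2.1 * Q.1,
        P.1 * Q.2.1 - P.2.1 * Q.1 + 2 * P.2.2.1 * Q.1 - 2 * P.1 * Q.2.2.1,
        P.1 * Q.2.1 - P.2.1 * Q.1 + 2 * P.2.1 * Q.2.2.1 - 2 * P.2.2.1 * Q.2.1) : G5 E)) ∧
    finrank K (G5 E) = 5 * m ∧
    IsThreeStepNilpotentAlg K (G5 E) ∧
    IsStemAlg K (G5 E) ∧
    HasBreadthTypeZeroN K (G5 E) (2 * m) := by
  have htwoK : (2:K) ≠ 0 := by
    intro h2
    have hprime : Nat.Prime (ringChar K) := CharP.char_is_prime K (ringChar K)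
    have hdvd : ringChar K ∣ 2 := (CharP.cast_eq_zero_iff K (ringChar K) 2).mp (by
      exact_mod_cast h2)
    have h2' : ringChar K = 2 := (Nat.prime_dvd_prime_iff_eq hprime Nat.prime_two).mp hdvd
    obtain ⟨n, -, hcard⟩ := FiniteField.card K (ringChar K)
    rw [hK, h2'] at hcard
    have heven : Even q := by
      rw [hcard]
      exact (Nat.even_pow' n.pos.ne').mpr even_two
    exact (Nat.not_odd_iff_even.mpr heven) hodd
  have htwoE : (2:E) ≠ 0 := by
    intro h
    apply htwoK
    have hmap : (algebraMap K E) 2 = 2 := map_ofNat _ 2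
    exact (algebraMap K E).injective (by rw [hmap, h, map_zero])
  refine ⟨fun P Q => rfl, ?_, ⟨gamma3_bot, gamma2_ne htwoE⟩, stem_aux htwoE, ?_, ?_⟩
  · rw [finrank_g5, hE]; ring
  · exact ⟨((1:E),0,0,0,0), ((0:E),1,0,0,0), by rw [br_mk]; norm_num [Prod.ext_iff]⟩
  · intro x hx
    obtain ⟨a, b, c, d, e⟩ := x
    rw [mem_center_iff htwoE] at hx
    have hc := finrank_cen (K := K) htwoE a b c d e hx
    show finrank K (G5 E) - finrank K _ = 2 * m
    rw [finrank_g5, hc, hE]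
    omega
end

section
/- Let q be an odd prime power and m ≥ 1. If α = (0,0,c,d,e) ∈ 𝔤_m' ∖ Z(𝔤_m) (equivalently, c ≠ 0), then the centralizer of α in 𝔤_m equals 𝔤_m' = {(0,0,c',d',e') : c',d',e' ∈ 𝔽_{q^m}}; in particular the breadth of α is 2m. -/
open Module

section U3

attribute [local instance 100] LieRing.ofAssociativeRing
attribute [local instance 100] LieAlgebra.ofAssociativeAlgebra

end U3

/-- For odd prime power `q`, `m ≥ 1` and `α = (0,0,c,d,e) ∈ 𝔤_m' ∖ Z(𝔤_m)`
(equivalently `c ≠ 0`), the centralizer of `α` in `𝔤_m` is `𝔤_m' = {(0,0,c',d',e')}`;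
in particular the breadth of `α` is `2m`. -/
theorem stmt10 (q m : ℕ) (hodd : Odd q) (hm : 1 ≤ m)
    (K : Type*) [Field K] [Fintype K] (hK : Fintype.card K = q)
    (E : Type*) [Field E] [Algebra K E] [FiniteDimensional K E]
    (hE : Module.finrank K E = m)
    (α : G5 E) (h1 : α.1 = 0) (h2 : α.2.1 = 0) (hc : α.2.2.1 ≠ 0) :
    (∀ P : G5 E, P ∈ lieCentralizer K α ↔ P.1 = 0 ∧ P.2.1 = 0) ∧
    lieBreadth K α = 2 * m := by
  -- 2 ≠ 0 in K
  have h2K : (2 : K) ≠ 0 := by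
    intro h2
    have hdvd : ringChar K ∣ 2 := ringChar.dvd (by exact_mod_cast h2)
    have hprime : (ringChar K).Prime := CharP.char_is_prime K (ringChar K)
    have hchar2 : ringChar K = 2 := ((Nat.prime_dvd_prime_iff_eq hprime Nat.prime_two).mp hdvd)
    obtain ⟨n, hn⟩ := FiniteField.card K (ringChar K)
    rw [hchar2] at hn
    have : Even q := by
      rw [← hK, hn.2]
      exact Nat.even_pow.mpr ⟨even_two, n.pos.ne'⟩
    exact (Nat.not_even_iff_odd.mpr hodd) this
  have h2E : (2 : E) ≠ 0 := by
    intro h2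
    apply h2K
    apply (algebraMap K E).injective
    rw [map_ofNat, map_zero, h2]
  have h2c : (2 : E) * α.2.2.1 ≠ 0 := mul_ne_zero h2E hc
  -- membership characterization
  have key : ∀ P : G5 E, P ∈ lieCentralizer K α ↔ P.1 = 0 ∧ P.2.1 = 0 := by
    intro P
    constructor
    · intro h
      have h' : G5.br α P = 0 := h
      rw [G5.br] at h'
      rw [Prod.ext_iff, Prod.ext_iff, Prod.ext_iff, Prod.ext_iff] at h'
      obtain ⟨-, -, -, h4, h5⟩ := h'
      simp only [h1, h2, zero_mul, mul_zero, sub_zero, zero_sub, zero_add, zero_mul,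
        Prod.snd_zero, Prod.fst_zero, neg_eq_zero, sub_self] at h4 h5
      constructor
      · rcases mul_eq_zero.mp h4 with h | h
        · exact absurd h h2c
        · exact h
      · rcases mul_eq_zero.mp h5 with h | h
        · exact absurd h h2c
        · exact h
    · rintro ⟨hx, hy⟩
      show G5.br α P = 0
      rw [G5.br, h1, h2, hx, hy]
      simp
  refine ⟨key, ?_⟩
  -- the centralizer is the kernel of the projection onto the first two coordinates
  let f : G5 E →ₗ[K] E × E :=
    LinearMap.prod (LinearMap.fst K E _) ((LinearMap.fst K E _).comp (LinearMap.snd K E _))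
  have hker : lieCentralizer K α = LinearMap.ker f := by
    ext P
    rw [LinearMap.mem_ker, key P]
    simp [f, Prod.ext_iff]
  have hsurj : Function.Surjective f := fun w => ⟨(w.1, w.2, 0, 0, 0), rfl⟩
  have hG5 : finrank K (G5 E) = 5 * m := by
    simp only [Module.finrank_prod, hE]; ring
  have hEE : finrank K (E × E) = 2 * m := by
    simp only [Module.finrank_prod, hE]; ring
  have hrange : finrank K (LinearMap.range f) = 2 * m := by
    rw [LinearMap.range_eq_top.mpr hsurj, finrank_top, hEE]
  have hdim := LinearMap.finrank_range_add_finrank_ker f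
  rw [hrange, hG5] at hdim
  have hkerdim : finrank K (LinearMap.ker f) = 3 * m := by omega
  rw [lieBreadth, hker, hkerdim, hG5]
  omega
end
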